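/- If the word b₁...bₙ immediately follows a₁...aₙ in the recursively defined full Gray code of words (1 ≤ aᵢ ≤ 2i−1), then there is exactly one index i with bᵢ = aᵢ ± 1 and b_j = a_j for all j ≠ i. -/

import Mathlib

/-!
Each block of the recursion, a word `p` followed by all last letters in increasing or
decreasing order, changes only the last letter by `1` at each step. Since the blocks alternate
in direction, the seam between the blocks of consecutive words `p`, `q` of the shorter code joins
`p ++ [x]` to `q ++ [x]` with `x ∈ {1, 2n+1}`, and this step is inherited from the step `p → q`.
-/

/-- The full Gray code of words: for `n = 0` the single empty word; words of
the length-`n` code at even (0-indexed, i.e. odd 1-indexed) positions are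
extended by last letters `1, 2, …, 2(n+1)-1` in increasing order, those at odd
(0-indexed) positions by the same last letters in decreasing order. -/
def grayCode : ℕ → List (List ℕ)
  | 0 => [[]]
  | n+1 =>
      (((grayCode n).zipIdx.map Prod.swap).map (fun p =>
        if p.1 % 2 = 0 then
          (List.range (2*n + 1)).map (fun j => p.2 ++ [j + 1])
        else
          ((List.range (2*n + 1)).map (fun j => p.2 ++ [j + 1])).reverse)).flatten

/-- The 1-indexed `i`-th letter of a word. -/
def wd (a : List ℕ) (i : ℕ) : ℕ := a.getD (i - 1) 0

/-- A word `a₁…aₙ` is arc-disconnected if there is a `k ≥ 2` with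
`a_k = 2k-1` and `a_j ≥ 2k-1` for all `j > k`. -/
def ArcDiscL (a : List ℕ) : Prop :=
  ∃ k, 2 ≤ k ∧ k ≤ a.length ∧ wd a k = 2*k - 1 ∧
    ∀ j, k < j → j ≤ a.length → 2*k - 1 ≤ wd a j

def AdjacentWords (n : ℕ) (a b : List ℕ) : Prop :=
  ∃ i, 1 ≤ i ∧ i ≤ n ∧ (wd b i = wd a i + 1 ∨ wd a i = wd b i + 1) ∧
    ∀ j, j ≠ i → wd b j = wd a j

theorem AdjacentWords.symm {n : ℕ} {a b : List ℕ} (h : AdjacentWords n a b) :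
    AdjacentWords n b a := by
  obtain ⟨i, hi₁, hin, hstep, hfix⟩ := h
  exact ⟨i, hi₁, hin, hstep.symm, fun j hj => (hfix j hj).symm⟩

-- `wd p 0 = wd p 1`, because `0 - 1 = 0` in `ℕ`; this is why `p` must be nonempty.
theorem wd_append_singleton_of_ne {p : List ℕ} (hp : p ≠ []) (x : ℕ) {j : ℕ}
    (hj : j ≠ p.length + 1) : wd (p ++ [x]) j = wd p j := by
  have hlen : 0 < p.length := List.length_pos_iff.2 hp
  unfold wd
  rcases lt_or_ge (j - 1) p.length with h | h
  · exact List.getD_append _ _ _ _ h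
  · rw [List.getD_eq_default _ _ h, List.getD_eq_default _ _ (by simp; omega)]

theorem wd_append_singleton_length_succ (p : List ℕ) (x : ℕ) :
    wd (p ++ [x]) (p.length + 1) = x := by
  simp [wd]

theorem AdjacentWords.append_singleton {n : ℕ} {p q : List ℕ} (hp : p.length = n)
    (hq : q.length = n) (h : AdjacentWords n p q) (x : ℕ) :
    AdjacentWords (n + 1) (p ++ [x]) (q ++ [x]) := by
  obtain ⟨i, hi₁, hin, hstep, hfix⟩ := h
  have hp₀ : p ≠ [] := List.ne_nil_of_length_pos (by omega)
  have hq₀ : q ≠ [] := List.ne_nil_of_length_pos (by omega)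
  refine ⟨i, hi₁, by omega, ?_, fun j hj => ?_⟩
  · rwa [wd_append_singleton_of_ne hp₀ x (by omega), wd_append_singleton_of_ne hq₀ x (by omega)]
  · by_cases hjn : j = n + 1
    · subst hjn
      rw [← hp, wd_append_singleton_length_succ, hp, ← hq, wd_append_singleton_length_succ]
    · rw [wd_append_singleton_of_ne hp₀ x (by omega), wd_append_singleton_of_ne hq₀ x (by omega)]
      exact hfix j hj

theorem adjacentWords_append_singleton_succ {p : List ℕ} (hp : p ≠ []) (x : ℕ) :
    AdjacentWords (p.length + 1) (p ++ [x]) (p ++ [x + 1]) := by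
  refine ⟨p.length + 1, by omega, le_rfl, Or.inl ?_, fun j hj => ?_⟩
  · simp only [wd_append_singleton_length_succ]
  · rw [wd_append_singleton_of_ne hp _ hj, wd_append_singleton_of_ne hp _ hj]

def extensions (n : ℕ) (p : List ℕ) : List (List ℕ) :=
  (List.range (2 * n + 1)).map fun j => p ++ [j + 1]

theorem extensions_head? (n : ℕ) (p : List ℕ) : (extensions n p).head? = some (p ++ [1]) := by
  simp [extensions, List.range_succ_eq_map]

theorem extensions_getLast? (n : ℕ) (p : List ℕ) :
    (extensions n p).getLast? = some (p ++ [2 * n + 1]) := by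
  simp [extensions, List.range_succ]

theorem isChain_extensions {n : ℕ} {p : List ℕ} (hp : p.length = n) :
    (extensions n p).IsChain (AdjacentWords (n + 1)) := by
  rw [extensions, List.isChain_map, List.isChain_iff_getElem]
  intro i hi
  rw [List.length_range] at hi
  simp only [List.getElem_range]
  have hp₀ : p ≠ [] := List.ne_nil_of_length_pos (by omega)
  exact hp ▸ adjacentWords_append_singleton_succ hp₀ (i + 1)

def grayBlock (n k : ℕ) (p : List ℕ) : List (List ℕ) :=
  if k % 2 = 0 then extensions n p else (extensions n p).reverse

theorem grayCode_succ (n : ℕ) :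
    grayCode (n + 1) = ((grayCode n).mapIdx (grayBlock n)).flatten := by
  rw [grayCode, List.mapIdx_eq_zipIdx_map, List.map_map]
  rfl

theorem isChain_grayBlock {n : ℕ} (k : ℕ) {p : List ℕ} (hp : p.length = n) :
    (grayBlock n k p).IsChain (AdjacentWords (n + 1)) := by
  unfold grayBlock
  split
  · exact isChain_extensions hp
  · exact List.isChain_reverse.2 ((isChain_extensions hp).imp fun _ _ h => h.symm)

theorem grayBlock_ne_nil (n k : ℕ) (p : List ℕ) : grayBlock n k p ≠ [] := by
  unfold grayBlock
  split <;> simp [extensions]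

theorem length_of_mem_grayBlock {n k : ℕ} {p a : List ℕ} (hp : p.length = n)
    (ha : a ∈ grayBlock n k p) : a.length = n + 1 := by
  have hext : a ∈ extensions n p := by unfold grayBlock at ha; split at ha <;> simpa using ha
  obtain ⟨j, -, rfl⟩ := List.mem_map.1 hext
  simp [hp]

theorem AdjacentWords.grayBlock_seam {n : ℕ} {p q : List ℕ} (hp : p.length = n)
    (hq : q.length = n) (h : AdjacentWords n p q) (k : ℕ) :
    ∀ x ∈ (grayBlock n k p).getLast?, ∀ y ∈ (grayBlock n (k + 1) q).head?,
      AdjacentWords (n + 1) x y := by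
  have hseam (x : ℕ) : AdjacentWords (n + 1) (p ++ [x]) (q ++ [x]) := h.append_singleton hp hq x
  rcases Nat.mod_two_eq_zero_or_one k with hk | hk
  · simp [grayBlock, hk, Nat.succ_mod_two_eq_zero_iff, extensions_getLast?, hseam]
  · simp [grayBlock, hk, Nat.succ_mod_two_eq_zero_iff, extensions_head?, hseam]

theorem length_of_mem_grayCode {n : ℕ} {a : List ℕ} (ha : a ∈ grayCode n) : a.length = n := by
  induction n generalizing a with
  | zero => simp_all [grayCode]
  | succ n ih =>
    simp only [grayCode_succ, List.mem_flatten, List.mem_mapIdx] at ha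
    obtain ⟨_, ⟨k, hk, rfl⟩, ha⟩ := ha
    exact length_of_mem_grayBlock (ih (List.getElem_mem hk)) ha

theorem isChain_grayCode (n : ℕ) : (grayCode n).IsChain (AdjacentWords n) := by
  induction n with
  | zero => exact List.isChain_singleton _
  | succ n ih =>
    have hlen {k : ℕ} (hk : k < (grayCode n).length) : (grayCode n)[k].length = n :=
      length_of_mem_grayCode (List.getElem_mem hk)
    have hblocks : [] ∉ (grayCode n).mapIdx (grayBlock n) := by
      simp only [List.mem_mapIdx, not_exists]
      exact fun k _ h => grayBlock_ne_nil n k _ h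
    rw [grayCode_succ, List.isChain_flatten hblocks, List.isChain_iff_getElem]
    refine ⟨fun l hl => ?_, fun k hk => ?_⟩
    · obtain ⟨k, hk, rfl⟩ := List.mem_mapIdx.1 hl
      exact isChain_grayBlock k (hlen hk)
    · simp only [List.length_mapIdx] at hk
      simp only [List.getElem_mapIdx]
      exact (List.isChain_iff_getElem.1 ih k hk).grayBlock_seam (hlen _) (hlen _) k

theorem stmt_10 (n m : ℕ) (a b : List ℕ)
    (ha : (grayCode n)[m]? = some a) (hb : (grayCode n)[m+1]? = some b) :
    ∃ i, 1 ≤ i ∧ i ≤ n ∧ (wd b i = wd a i + 1 ∨ wd a i = wd b i + 1) ∧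
      ∀ j, j ≠ i → wd b j = wd a j := by
  obtain ⟨-, rfl⟩ := List.getElem?_eq_some_iff.1 ha
  obtain ⟨hm₁, rfl⟩ := List.getElem?_eq_some_iff.1 hb
  exact List.isChain_iff_getElem.1 (isChain_grayCode n) m hm₁
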